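/- (Increasing monotone iteration step.) Let T > 0, let σ : [0,T] → (0,∞) and q_S, γ_S : [0,T] → ℝ be continuous, let r_G ≥ 0, and let G : ℝ × ℝ × [0,T] → ℝ be monotone nondecreasing in its first argument. Let u₀, w_m, w_{m+1} : ℝ × [0,T] → ℝ be continuous, with all derivatives ∂/∂t, ∂/∂x, ∂²/∂x² existing and continuous on ℝ × (0,T], each satisfying an exponential growth bound |u(x,t)| ≤ C e^{κ|x|}. Write 𝔏u = ∂u/∂t − (1/2)σ(t)² ∂²u/∂x² − (q_S(t) − γ_S(t) − (1/2)σ(t)²) ∂u/∂x + r_G u. Assume: (i) 𝔏u₀ ≥ G(u₀(x,t);x,t) and 𝔏(−u₀) ≤ G(−u₀(x,t);x,t) on ℝ × (0,T] with −u₀(x,0) ≤ v₀(x) ≤ u₀(x,0); (ii) 𝔏w_{m+1} = G(w_m(x,t);x,t) on ℝ × (0,T] with w_{m+1}(x,0) = v₀(x); (iii) −u₀ ≤ w_m ≤ u₀ on ℝ × [0,T], w_m(x,0) = v₀(x), and 𝔏w_m ≤ G(w_m(x,t);x,t) on ℝ × (0,T]. Then −u₀(x,t) ≤ w_m(x,t)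 ≤ w_{m+1}(x,t) ≤ u₀(x,t) for all (x,t) ∈ ℝ × [0,T], and 𝔏w_{m+1} ≤ G(w_{m+1}(x,t);x,t) on ℝ × (0,T]. -/

import Mathlib

/-!
Both inequalities `w_m ≤ w_{m+1} ≤ u₀` come from one comparison principle: if `z` has
exponential growth, `𝔏z ≥ 0` and `z(·,0) ≥ 0`, then `z ≥ 0`. To prove it, add
`ε e^{λt} cosh(μx)` with `μ = |κ| + 1`, so that the sum is positive for large `|x|`, and `λ`
so large that this barrier satisfies `𝔏 barrier ≥ barrier`. Were the sum negative somewhere,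
it would attain a negative minimum at some `t₀ > 0`; there `∂ₜ ≤ 0`, `∂ₓ = 0`, `∂ₓₓ ≥ 0`
give `𝔏 ≤ r_G · (sum) ≤ 0`, against `𝔏 ≥ ε · barrier > 0`. Letting `ε → 0` gives `z ≥ 0`.
Monotonicity of `G` then turns `𝔏w_{m+1} = G(w_m)` into `𝔏w_{m+1} ≤ G(w_{m+1})`.
-/

open Real Set

/-- Regularity of a candidate super- or subsolution `u : ℝ × [0,T] → ℝ` with derivative
witnesses `ut = ∂u/∂t`, `ux = ∂u/∂x`, `uxx = ∂²u/∂x²`: `u` is continuous on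
`ℝ × [0,T]`, the derivatives exist and are continuous on `ℝ × (0,T]`, and `u`
satisfies the exponential growth bound `|u(x,t)| ≤ C e^{κ|x|}`. -/
structure IsRegularParabolic (T : ℝ) (u ut ux uxx : ℝ → ℝ → ℝ) (C kappa : ℝ) : Prop where
  cont : ContinuousOn (fun p : ℝ × ℝ => u p.1 p.2) (Set.univ ×ˢ Set.Icc 0 T)
  hasDeriv_t : ∀ x : ℝ, ∀ t ∈ Set.Ioc (0:ℝ) T,
    HasDerivWithinAt (fun s => u x s) (ut x t) (Set.Ioc 0 T) t
  hasDeriv_x : ∀ x : ℝ, ∀ t ∈ Set.Ioc (0:ℝ) T, HasDerivAt (fun y => u y t) (ux x t) x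
  hasDeriv_xx : ∀ x : ℝ, ∀ t ∈ Set.Ioc (0:ℝ) T, HasDerivAt (fun y => ux y t) (uxx x t) x
  cont_t : ContinuousOn (fun p : ℝ × ℝ => ut p.1 p.2) (Set.univ ×ˢ Set.Ioc 0 T)
  cont_x : ContinuousOn (fun p : ℝ × ℝ => ux p.1 p.2) (Set.univ ×ˢ Set.Ioc 0 T)
  cont_xx : ContinuousOn (fun p : ℝ × ℝ => uxx p.1 p.2) (Set.univ ×ˢ Set.Ioc 0 T)
  growth : ∀ x : ℝ, ∀ t ∈ Set.Icc (0:ℝ) T, |u x t| ≤ C * Real.exp (kappa * |x|)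

/-- The parabolic Black–Scholes operator
`𝔏u = ∂u/∂t − (1/2)σ(t)²∂²u/∂x² − (q_S(t) − γ_S(t) − (1/2)σ(t)²)∂u/∂x + r_G u`
evaluated via the derivative witnesses. -/
noncomputable def Lop (sigma qS gammaS : ℝ → ℝ) (rG : ℝ) (u ut ux uxx : ℝ → ℝ → ℝ)
    (x t : ℝ) : ℝ :=
  ut x t - (1/2) * (sigma t) ^ 2 * uxx x t
    - (qS t - gammaS t - (1/2) * (sigma t) ^ 2) * ux x t + rG * u x t

open Filter Topology

theorem abs_sinh_le_cosh (y : ℝ) : |sinh y| ≤ cosh y := by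
  rw [abs_sinh, ← cosh_abs]
  exact (sinh_lt_cosh _).le

theorem exp_abs_le_two_mul_cosh (y : ℝ) : exp |y| ≤ 2 * cosh y := by
  rw [← cosh_abs, cosh_eq]
  linarith [exp_pos (-|y|)]

theorem IsLocalMin.second_deriv_nonneg {g g' : ℝ → ℝ} {x₀ g'' : ℝ} (hmin : IsLocalMin g x₀)
    (hg : ∀ y, HasDerivAt g (g' y) y) (hg' : HasDerivAt g' g'' x₀) : 0 ≤ g'' := by
  by_contra! hneg
  have hderiv : deriv g = g' := funext fun y => (hg y).deriv
  -- By the second derivative test `x₀` is also a local maximum, so `g` is locally constant there.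
  have hmax : IsLocalMax g x₀ :=
    isLocalMax_of_deriv_deriv_neg (by rwa [hderiv, hg'.deriv])
      (by rw [hderiv]; exact hmin.hasDerivAt_eq_zero (hg x₀)) (hg x₀).continuousAt
  have hconst : g =ᶠ[𝓝 x₀] fun _ => g x₀ := by
    filter_upwards [hmin, hmax] with y h₁ h₂ using le_antisymm h₂ h₁
  have hzero : g' =ᶠ[𝓝 x₀] fun _ => 0 := by
    simpa only [hderiv, deriv_const'] using hconst.deriv
  have := hg'.unique ((hasDerivAt_const x₀ (0 : ℝ)).congr_of_eventuallyEq hzero)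
  linarith

theorem HasDerivWithinAt.nonpos_of_isMinOn_Ioc {f : ℝ → ℝ} {a b t₀ d : ℝ}
    (hd : HasDerivWithinAt f d (Ioc a b) t₀) (hmin : IsMinOn f (Ioc a b) t₀)
    (ht₀ : t₀ ∈ Ioc a b) : d ≤ 0 := by
  have hcone : (a + t₀) / 2 - t₀ ∈ posTangentConeAt (Ioc a b) t₀ := by
    refine sub_mem_posTangentConeAt_of_segment_subset ?_
    rw [segment_symm, segment_eq_Icc (by linarith [ht₀.1])]
    exact Icc_subset_Ioc (by linarith [ht₀.1]) ht₀.2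
  have := hmin.localize.hasFDerivWithinAt_nonneg hd.hasFDerivWithinAt hcone
  simp only [ContinuousLinearMap.toSpanSingleton_apply, smul_eq_mul] at this
  nlinarith [ht₀.1]

theorem exists_isMinOn_of_nonneg_of_le_abs {v : ℝ × ℝ → ℝ} {s : Set ℝ} {R : ℝ}
    (hs : IsCompact s) (hv : ContinuousOn v (univ ×ˢ s))
    (hR : ∀ p ∈ (univ : Set ℝ) ×ˢ s, R ≤ |p.1| → 0 ≤ v p)
    {p₁ : ℝ × ℝ} (hp₁ : p₁ ∈ (univ : Set ℝ) ×ˢ s) (hneg : v p₁ < 0) :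
    ∃ p₀ ∈ (univ : Set ℝ) ×ˢ s, IsMinOn v (univ ×ˢ s) p₀ := by
  have hKsub : Icc (-R) R ×ˢ s ⊆ univ ×ˢ s := prod_mono (subset_univ _) le_rfl
  have hnear : ∀ p ∈ (univ : Set ℝ) ×ˢ s, v p < 0 → p ∈ Icc (-R) R ×ˢ s := fun p hp hvp =>
    ⟨abs_le.mp (not_le.mp fun h => (hR p hp h).not_gt hvp).le, hp.2⟩
  obtain ⟨p₀, hp₀, hmin⟩ :=
    (isCompact_Icc.prod hs).exists_isMinOn ⟨p₁, hnear p₁ hp₁ hneg⟩ (hv.mono hKsub)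
  have hv₀ : v p₀ < 0 := (hmin (hnear p₁ hp₁ hneg)).trans_lt hneg
  refine ⟨p₀, hKsub hp₀, fun p hp => ?_⟩
  by_cases hvp : v p < 0
  · exact hmin (hnear p hp hvp)
  · exact hv₀.le.trans (not_lt.mp hvp)

section Lop

variable {sigma qS gammaS : ℝ → ℝ} {rG : ℝ}

theorem Lop_sub (u ut ux uxx w wt wx wxx : ℝ → ℝ → ℝ) (x t : ℝ) :
    Lop sigma qS gammaS rG (fun x t => u x t - w x t) (fun x t => ut x t - wt x t)
        (fun x t => ux x t - wx x t) (fun x t => uxx x t - wxx x t) x t =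
      Lop sigma qS gammaS rG u ut ux uxx x t - Lop sigma qS gammaS rG w wt wx wxx x t := by
  simp only [Lop]
  ring

theorem Lop_add_mul (c : ℝ) (u ut ux uxx w wt wx wxx : ℝ → ℝ → ℝ) (x t : ℝ) :
    Lop sigma qS gammaS rG (fun x t => u x t + c * w x t) (fun x t => ut x t + c * wt x t)
        (fun x t => ux x t + c * wx x t) (fun x t => uxx x t + c * wxx x t) x t =
      Lop sigma qS gammaS rG u ut ux uxx x t + c * Lop sigma qS gammaS rG w wt wx wxx x t := by
  simp only [Lop]
  ring

theorem Lop_le_mul_of_isMinOn {T : ℝ} {v vt vx vxx : ℝ → ℝ → ℝ} {x₀ t₀ : ℝ}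
    (ht₀ : t₀ ∈ Ioc 0 T)
    (hmin : IsMinOn (fun p : ℝ × ℝ => v p.1 p.2) (univ ×ˢ Icc 0 T) (x₀, t₀))
    (ht : HasDerivWithinAt (fun s => v x₀ s) (vt x₀ t₀) (Ioc 0 T) t₀)
    (hx : ∀ y, HasDerivAt (fun y => v y t₀) (vx y t₀) y)
    (hxx : HasDerivAt (fun y => vx y t₀) (vxx x₀ t₀) x₀) :
    Lop sigma qS gammaS rG v vt vx vxx x₀ t₀ ≤ rG * v x₀ t₀ := by
  have hmin_x : IsLocalMin (fun y => v y t₀) x₀ :=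
    IsMinOn.isLocalMin (fun y _ => isMinOn_iff.mp hmin (y, t₀)
      ⟨mem_univ y, Ioc_subset_Icc_self ht₀⟩) univ_mem
  have hmin_t : IsMinOn (fun s => v x₀ s) (Ioc 0 T) t₀ :=
    fun s hs => isMinOn_iff.mp hmin (x₀, s) ⟨mem_univ x₀, Ioc_subset_Icc_self hs⟩
  have hvt : vt x₀ t₀ ≤ 0 := ht.nonpos_of_isMinOn_Ioc hmin_t ht₀
  have hvx : vx x₀ t₀ = 0 := hmin_x.hasDerivAt_eq_zero (hx x₀)
  have hvxx : 0 ≤ (1/2) * sigma t₀ ^ 2 * vxx x₀ t₀ := by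
    have := hmin_x.second_deriv_nonneg hx hxx
    positivity
  simp only [Lop, hvx, mul_zero, sub_zero]
  linarith

end Lop

section Barrier

variable (lam mu : ℝ)

noncomputable def barrier (x t : ℝ) : ℝ := exp (lam * t) * cosh (mu * x)

noncomputable def barrierDeriv (x t : ℝ) : ℝ := mu * exp (lam * t) * sinh (mu * x)

variable {lam mu}

theorem barrier_pos (x t : ℝ) : 0 < barrier lam mu x t :=
  mul_pos (exp_pos _) (cosh_pos _)

theorem hasDerivAt_barrier_t (x t : ℝ) :
    HasDerivAt (fun s => barrier lam mu x s) (lam * barrier lam mu x t) t := by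
  unfold barrier
  exact (((hasDerivAt_id' t).const_mul lam).exp.mul_const _).congr_deriv (by ring)

theorem hasDerivAt_barrier_x (x t : ℝ) :
    HasDerivAt (fun y => barrier lam mu y t) (barrierDeriv lam mu x t) x := by
  unfold barrier barrierDeriv
  exact (((hasDerivAt_id' x).const_mul mu).cosh.const_mul _).congr_deriv (by ring)

theorem hasDerivAt_barrierDeriv (x t : ℝ) :
    HasDerivAt (fun y => barrierDeriv lam mu y t) (mu ^ 2 * barrier lam mu x t) x := by
  unfold barrier barrierDeriv
  exact (((hasDerivAt_id' x).const_mul mu).sinh.const_mul _).congr_deriv (by ring)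

theorem barrier_le_Lop {sigma qS gammaS : ℝ → ℝ} {rG : ℝ} (hrG : 0 ≤ rG) (hmu : 0 ≤ mu)
    {x t : ℝ}
    (hlam : sigma t ^ 2 / 2 * mu ^ 2 + |qS t - gammaS t - (1/2) * sigma t ^ 2| * mu + 1 ≤ lam) :
    barrier lam mu x t ≤ Lop sigma qS gammaS rG (barrier lam mu)
      (fun x t => lam * barrier lam mu x t) (barrierDeriv lam mu)
      (fun x t => mu ^ 2 * barrier lam mu x t) x t := by
  simp only [Lop]
  set b := qS t - gammaS t - (1/2) * sigma t ^ 2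
  have hE := exp_pos (lam * t)
  have hsinh : b * sinh (mu * x) ≤ |b| * cosh (mu * x) := by
    calc b * sinh (mu * x) ≤ |b * sinh (mu * x)| := le_abs_self _
      _ = |b| * |sinh (mu * x)| := abs_mul _ _
      _ ≤ |b| * cosh (mu * x) := by gcongr; exact abs_sinh_le_cosh _
  have hdrift := mul_le_mul_of_nonneg_left hsinh (mul_nonneg hmu hE.le)
  have hrest := mul_le_mul_of_nonneg_right hlam (barrier_pos (lam := lam) (mu := mu) x t).le
  have hdamp := mul_nonneg hrG (barrier_pos (lam := lam) (mu := mu) x t).le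
  simp only [barrier, barrierDeriv] at hrest hdamp ⊢
  linear_combination hrest + hdrift + hdamp

end Barrier

theorem mul_exp_lt_mul_cosh {A kappa ε x : ℝ} (hε : 0 < ε) (hx : 2 * |A| / ε ≤ |x|) :
    A * exp (kappa * |x|) < ε * cosh ((|kappa| + 1) * x) := by
  have hA : A * exp (kappa * |x|) ≤ |A| * exp (|kappa| * |x|) := by
    gcongr
    · exact le_abs_self A
    · exact le_abs_self kappa
  have hlarge : 2 * |A| < ε * exp |x| :=
    calc 2 * |A| = ε * (2 * |A| / ε) := by field_simp
      _ ≤ ε * |x| := by gcongr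
      _ < ε * exp |x| := by gcongr; linarith [add_one_le_exp |x|]
  have hcosh : exp ((|kappa| + 1) * |x|) ≤ 2 * cosh ((|kappa| + 1) * x) := by
    simpa [abs_mul, abs_of_pos (by positivity : 0 < |kappa| + 1)] using
      exp_abs_le_two_mul_cosh ((|kappa| + 1) * x)
  have hsplit : exp ((|kappa| + 1) * |x|) = exp (|kappa| * |x|) * exp |x| := by
    rw [← exp_add]
    ring_nf
  nlinarith [mul_lt_mul_of_pos_right hlarge (exp_pos (|kappa| * |x|))]

theorem exists_barrier_rate {T : ℝ} {sigma qS gammaS : ℝ → ℝ}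
    (hσ : ContinuousOn sigma (Icc 0 T)) (hq : ContinuousOn qS (Icc 0 T))
    (hγ : ContinuousOn gammaS (Icc 0 T)) (mu : ℝ) :
    ∃ lam, 0 ≤ lam ∧ ∀ t ∈ Icc 0 T,
      sigma t ^ 2 / 2 * mu ^ 2 + |qS t - gammaS t - (1/2) * sigma t ^ 2| * mu + 1 ≤ lam := by
  have hcont : ContinuousOn (fun t => sigma t ^ 2 / 2 * mu ^ 2
      + |qS t - gammaS t - (1/2) * sigma t ^ 2| * mu + 1) (Icc 0 T) := by
    fun_prop
  obtain ⟨lam, hlam0, hlam⟩ := (bddAbove_iff_exists_ge 0).mp (isCompact_Icc.bddAbove_image hcont)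
  exact ⟨lam, hlam0, fun t ht => hlam _ (mem_image_of_mem _ ht)⟩

namespace IsRegularParabolic

variable {T : ℝ} {z zt zx zxx : ℝ → ℝ → ℝ} {A kappa : ℝ}

theorem sub {w wt wx wxx : ℝ → ℝ → ℝ} {A' : ℝ} (hz : IsRegularParabolic T z zt zx zxx A kappa)
    (hw : IsRegularParabolic T w wt wx wxx A' kappa) :
    IsRegularParabolic T (fun x t => z x t - w x t) (fun x t => zt x t - wt x t)
      (fun x t => zx x t - wx x t) (fun x t => zxx x t - wxx x t) (A + A') kappa where
  cont := hz.cont.sub hw.cont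
  hasDeriv_t x t ht := (hz.hasDeriv_t x t ht).sub (hw.hasDeriv_t x t ht)
  hasDeriv_x x t ht := (hz.hasDeriv_x x t ht).sub (hw.hasDeriv_x x t ht)
  hasDeriv_xx x t ht := (hz.hasDeriv_xx x t ht).sub (hw.hasDeriv_xx x t ht)
  cont_t := hz.cont_t.sub hw.cont_t
  cont_x := hz.cont_x.sub hw.cont_x
  cont_xx := hz.cont_xx.sub hw.cont_xx
  growth x t ht := by
    calc |z x t - w x t| ≤ |z x t| + |w x t| := abs_sub _ _
      _ ≤ (A + A') * exp (kappa * |x|) := by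
        rw [add_mul]
        exact add_le_add (hz.growth x t ht) (hw.growth x t ht)

variable {sigma qS gammaS : ℝ → ℝ} {rG : ℝ}

theorem add_barrier_nonneg {lam ε : ℝ} (hz : IsRegularParabolic T z zt zx zxx A kappa)
    (hrG : 0 ≤ rG) (hlam0 : 0 ≤ lam)
    (hlam : ∀ t ∈ Icc 0 T, sigma t ^ 2 / 2 * (|kappa| + 1) ^ 2
      + |qS t - gammaS t - (1/2) * sigma t ^ 2| * (|kappa| + 1) + 1 ≤ lam)
    (hL : ∀ x, ∀ t ∈ Ioc 0 T, 0 ≤ Lop sigma qS gammaS rG z zt zx zxx x t)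
    (h0 : ∀ x, 0 ≤ z x 0) (hε : 0 < ε) :
    ∀ x, ∀ t ∈ Icc 0 T, 0 ≤ z x t + ε * barrier lam (|kappa| + 1) x t := by
  set mu := |kappa| + 1
  intro x₁ t₁ ht₁
  by_contra! hneg
  have hfar : ∀ p ∈ (univ : Set ℝ) ×ˢ Icc 0 T, 2 * |A| / ε ≤ |p.1| →
      0 ≤ z p.1 p.2 + ε * barrier lam mu p.1 p.2 := by
    rintro ⟨x, t⟩ ⟨-, ht⟩ hx
    have hgrowth := (abs_le.mp (hz.growth x t ht)).1
    have hcosh : cosh (mu * x) ≤ barrier lam mu x t :=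
      le_mul_of_one_le_left (cosh_pos _).le (one_le_exp (mul_nonneg hlam0 ht.1))
    nlinarith [mul_exp_lt_mul_cosh (kappa := kappa) hε hx]
  have hcont : ContinuousOn (fun p : ℝ × ℝ => z p.1 p.2 + ε * barrier lam mu p.1 p.2)
      (univ ×ˢ Icc 0 T) :=
    hz.cont.add (by unfold barrier; fun_prop)
  obtain ⟨⟨x₀, t₀⟩, ⟨-, ht₀⟩, hmin⟩ :=
    exists_isMinOn_of_nonneg_of_le_abs (p₁ := (x₁, t₁)) isCompact_Icc hcont hfar
      ⟨mem_univ x₁, ht₁⟩ hneg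
  have hv₀ : z x₀ t₀ + ε * barrier lam mu x₀ t₀ < 0 :=
    (isMinOn_iff.mp hmin (x₁, t₁) ⟨mem_univ x₁, ht₁⟩).trans_lt hneg
  have hεβ := mul_pos hε (barrier_pos (lam := lam) (mu := mu) x₀ t₀)
  have ht₀' : t₀ ∈ Ioc 0 T := by
    refine ⟨ht₀.1.lt_of_ne ?_, ht₀.2⟩
    rintro rfl
    linarith [h0 x₀]
  have hupper := Lop_le_mul_of_isMinOn (sigma := sigma) (qS := qS) (gammaS := gammaS) (rG := rG)
    (v := fun x t => z x t + ε * barrier lam mu x t)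
    (vt := fun x t => zt x t + ε * (lam * barrier lam mu x t))
    (vx := fun x t => zx x t + ε * barrierDeriv lam mu x t)
    (vxx := fun x t => zxx x t + ε * (mu ^ 2 * barrier lam mu x t)) ht₀' hmin
    ((hz.hasDeriv_t x₀ t₀ ht₀').add ((hasDerivAt_barrier_t x₀ t₀).hasDerivWithinAt.const_mul ε))
    (fun y => (hz.hasDeriv_x y t₀ ht₀').add ((hasDerivAt_barrier_x y t₀).const_mul ε))
    ((hz.hasDeriv_xx x₀ t₀ ht₀').add ((hasDerivAt_barrierDeriv x₀ t₀).const_mul ε))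
  rw [Lop_add_mul] at hupper
  have hbar := barrier_le_Lop (sigma := sigma) (qS := qS) (gammaS := gammaS) hrG
    (by positivity : 0 ≤ mu) (x := x₀) (hlam t₀ ht₀)
  nlinarith [hL x₀ t₀ ht₀', mul_nonpos_of_nonneg_of_nonpos hrG hv₀.le]

theorem nonneg_of_Lop_nonneg (hz : IsRegularParabolic T z zt zx zxx A kappa)
    (hσ : ContinuousOn sigma (Icc 0 T)) (hq : ContinuousOn qS (Icc 0 T))
    (hγ : ContinuousOn gammaS (Icc 0 T)) (hrG : 0 ≤ rG)
    (hL : ∀ x, ∀ t ∈ Ioc 0 T, 0 ≤ Lop sigma qS gammaS rG z zt zx zxx x t)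
    (h0 : ∀ x, 0 ≤ z x 0) :
    ∀ x, ∀ t ∈ Icc 0 T, 0 ≤ z x t := by
  obtain ⟨lam, hlam0, hlam⟩ := exists_barrier_rate hσ hq hγ (|kappa| + 1)
  intro x t ht
  refine le_of_forall_pos_le_add fun δ hδ => ?_
  have hβ := barrier_pos (lam := lam) (mu := |kappa| + 1) x t
  have := hz.add_barrier_nonneg hrG hlam0 hlam hL h0 (div_pos hδ hβ) x t ht
  rwa [div_mul_cancel₀ _ hβ.ne'] at this

end IsRegularParabolic

theorem stmt_12_general (T : ℝ) (sigma qS gammaS : ℝ → ℝ)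
    (hsigmac : ContinuousOn sigma (Set.Icc 0 T))
    (hqc : ContinuousOn qS (Set.Icc 0 T)) (hgc : ContinuousOn gammaS (Set.Icc 0 T))
    (rG : ℝ) (hrG : 0 ≤ rG)
    (G : ℝ → ℝ → ℝ → ℝ)
    (hGmono : ∀ x : ℝ, ∀ t ∈ Set.Icc (0:ℝ) T, ∀ v₁ v₂ : ℝ, v₁ ≤ v₂ → G v₁ x t ≤ G v₂ x t)
    (v0 : ℝ → ℝ)
    (u0 u0t u0x u0xx wm wmt wmx wmxx wm1 wm1t wm1x wm1xx : ℝ → ℝ → ℝ)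
    (C kappa : ℝ)
    (hreg0 : IsRegularParabolic T u0 u0t u0x u0xx C kappa)
    (hregm : IsRegularParabolic T wm wmt wmx wmxx C kappa)
    (hregm1 : IsRegularParabolic T wm1 wm1t wm1x wm1xx C kappa)
    -- (i) u₀ is a supersolution and −u₀ a subsolution, dominating the initial datum:
    (hu0sup : ∀ x : ℝ, ∀ t ∈ Set.Ioc (0:ℝ) T,
      Lop sigma qS gammaS rG u0 u0t u0x u0xx x t ≥ G (u0 x t) x t)
    (hinit0 : ∀ x : ℝ, -u0 x 0 ≤ v0 x ∧ v0 x ≤ u0 x 0)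
    -- (ii) w_{m+1} solves the linear problem with right-hand side G(w_m;x,t):
    (hm1eq : ∀ x : ℝ, ∀ t ∈ Set.Ioc (0:ℝ) T,
      Lop sigma qS gammaS rG wm1 wm1t wm1x wm1xx x t = G (wm x t) x t)
    (hm1init : ∀ x : ℝ, wm1 x 0 = v0 x)
    -- (iii) w_m is a subsolution squeezed between −u₀ and u₀:
    (hmbound : ∀ x : ℝ, ∀ t ∈ Set.Icc (0:ℝ) T, -u0 x t ≤ wm x t ∧ wm x t ≤ u0 x t)
    (hminit : ∀ x : ℝ, wm x 0 = v0 x)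
    (hmsub : ∀ x : ℝ, ∀ t ∈ Set.Ioc (0:ℝ) T,
      Lop sigma qS gammaS rG wm wmt wmx wmxx x t ≤ G (wm x t) x t) :
    (∀ x : ℝ, ∀ t ∈ Set.Icc (0:ℝ) T,
      -u0 x t ≤ wm x t ∧ wm x t ≤ wm1 x t ∧ wm1 x t ≤ u0 x t) ∧
    (∀ x : ℝ, ∀ t ∈ Set.Ioc (0:ℝ) T,
      Lop sigma qS gammaS rG wm1 wm1t wm1x wm1xx x t ≤ G (wm1 x t) x t) := by
  have hstep : ∀ x, ∀ t ∈ Icc 0 T, 0 ≤ wm1 x t - wm x t :=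
    (hregm1.sub hregm).nonneg_of_Lop_nonneg hsigmac hqc hgc hrG
      (fun x t ht => by rw [Lop_sub, hm1eq x t ht]; linarith [hmsub x t ht])
      (fun x => by simp [hm1init x, hminit x])
  have hbelow_u0 : ∀ x, ∀ t ∈ Icc 0 T, 0 ≤ u0 x t - wm1 x t :=
    (hreg0.sub hregm1).nonneg_of_Lop_nonneg hsigmac hqc hgc hrG
      (fun x t ht => by
        have hG := hGmono x t (Ioc_subset_Icc_self ht) _ _ (hmbound x t (Ioc_subset_Icc_self ht)).2
        rw [Lop_sub, hm1eq x t ht]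
        linarith [hu0sup x t ht])
      (fun x => by linarith [hm1init x, (hinit0 x).2])
  refine ⟨fun x t ht => ⟨(hmbound x t ht).1, by linarith [hstep x t ht],
    by linarith [hbelow_u0 x t ht]⟩, fun x t ht => ?_⟩
  rw [hm1eq x t ht]
  exact hGmono x t (Ioc_subset_Icc_self ht) _ _ (by linarith [hstep x t (Ioc_subset_Icc_self ht)])

/-- Increasing monotone iteration step: if `u₀` is a supersolution (and `−u₀` a
subsolution) of the semilinear equation `𝔏v = G(v;x,t)`, `w_m` is a subsolution
with `−u₀ ≤ w_m ≤ u₀` and `w_m(·,0) = v₀`, and `w_{m+1}` solves the linear problem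
`𝔏w_{m+1} = G(w_m;x,t)`, `w_{m+1}(·,0) = v₀`, then
`−u₀ ≤ w_m ≤ w_{m+1} ≤ u₀` on `ℝ × [0,T]` and `w_{m+1}` is again a subsolution. -/
theorem stmt_12 (T : ℝ) (hT : 0 < T) (sigma qS gammaS : ℝ → ℝ)
    (hsigmac : ContinuousOn sigma (Set.Icc 0 T))
    (hsigmapos : ∀ t ∈ Set.Icc (0:ℝ) T, 0 < sigma t)
    (hqc : ContinuousOn qS (Set.Icc 0 T)) (hgc : ContinuousOn gammaS (Set.Icc 0 T))
    (rG : ℝ) (hrG : 0 ≤ rG)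
    (G : ℝ → ℝ → ℝ → ℝ)
    (hGmono : ∀ x : ℝ, ∀ t ∈ Set.Icc (0:ℝ) T, ∀ v₁ v₂ : ℝ, v₁ ≤ v₂ → G v₁ x t ≤ G v₂ x t)
    (v0 : ℝ → ℝ)
    (u0 u0t u0x u0xx wm wmt wmx wmxx wm1 wm1t wm1x wm1xx : ℝ → ℝ → ℝ)
    (C kappa : ℝ) (hC : 0 ≤ C) (hkappa : 0 ≤ kappa)
    (hreg0 : IsRegularParabolic T u0 u0t u0x u0xx C kappa)
    (hregm : IsRegularParabolic T wm wmt wmx wmxx C kappa)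
    (hregm1 : IsRegularParabolic T wm1 wm1t wm1x wm1xx C kappa)
    -- (i) u₀ is a supersolution and −u₀ a subsolution, dominating the initial datum:
    (hu0sup : ∀ x : ℝ, ∀ t ∈ Set.Ioc (0:ℝ) T,
      Lop sigma qS gammaS rG u0 u0t u0x u0xx x t ≥ G (u0 x t) x t)
    (hu0sub : ∀ x : ℝ, ∀ t ∈ Set.Ioc (0:ℝ) T,
      -Lop sigma qS gammaS rG u0 u0t u0x u0xx x t ≤ G (-u0 x t) x t)
    (hinit0 : ∀ x : ℝ, -u0 x 0 ≤ v0 x ∧ v0 x ≤ u0 x 0)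
    -- (ii) w_{m+1} solves the linear problem with right-hand side G(w_m;x,t):
    (hm1eq : ∀ x : ℝ, ∀ t ∈ Set.Ioc (0:ℝ) T,
      Lop sigma qS gammaS rG wm1 wm1t wm1x wm1xx x t = G (wm x t) x t)
    (hm1init : ∀ x : ℝ, wm1 x 0 = v0 x)
    -- (iii) w_m is a subsolution squeezed between −u₀ and u₀:
    (hmbound : ∀ x : ℝ, ∀ t ∈ Set.Icc (0:ℝ) T, -u0 x t ≤ wm x t ∧ wm x t ≤ u0 x t)
    (hminit : ∀ x : ℝ, wm x 0 = v0 x)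
    (hmsub : ∀ x : ℝ, ∀ t ∈ Set.Ioc (0:ℝ) T,
      Lop sigma qS gammaS rG wm wmt wmx wmxx x t ≤ G (wm x t) x t) :
    (∀ x : ℝ, ∀ t ∈ Set.Icc (0:ℝ) T,
      -u0 x t ≤ wm x t ∧ wm x t ≤ wm1 x t ∧ wm1 x t ≤ u0 x t) ∧
    (∀ x : ℝ, ∀ t ∈ Set.Ioc (0:ℝ) T,
      Lop sigma qS gammaS rG wm1 wm1t wm1x wm1xx x t ≤ G (wm1 x t) x t) :=
  stmt_12_general T sigma qS gammaS hsigmac hqc hgc rG hrG G hGmono v0 u0 u0t u0x u0xx wm wmt wmx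
    wmxx wm1 wm1t wm1x wm1xx C kappa hreg0 hregm hregm1 hu0sup hinit0 hm1eq hm1init hmbound hminit
    hmsub
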